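/- arXiv:2202.02672 — 2 statements merged into one kernel-verified Lean document; each statement's English description precedes it below -/
import Mathlib

section
/- Consider the goods instance with two agents a, b and three goods g_1, g_2, g_3, where v_{a g_1} = 1, v_{a g_2} = 0, v_{a g_3} = 2 and v_{b g_1} = 0, v_{b g_2} = 1, v_{b g_3} = 2. No allocation of the three goods is both PropM0 and Pareto-optimal. -/
open scoped Classical
open Finset

noncomputable section FairDivision

variable {N I : Type*}

/-- Additive value of agent `i` for a bundle `S`. -/
def bval (v : N → I → ℝ) (i : N) (S : Finset I) : ℝ := ∑ j ∈ S, v i j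

/-- `x` is an allocation of the item set `S`: the bundles are pairwise disjoint
and together cover exactly `S`. -/
def IsAllocation [Fintype N] (x : N → Finset I) (S : Finset I) : Prop :=
  (∀ i h : N, i ≠ h → Disjoint (x i) (x h)) ∧ Finset.univ.biUnion x = S

/-- Envy-freeness up to any item (mixed manna version). -/
def EFX (v : N → I → ℝ) (x : N → Finset I) : Prop :=
  ∀ i h : N,
    (∀ g ∈ x h, 0 < v i g → bval v i (x i) ≥ bval v i ((x h).erase g)) ∨
    (∀ c ∈ x i, v i c < 0 → bval v i ((x i).erase c) ≥ bval v i (x h))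

/-- The stronger notion EFX₀, where goods of zero value are also considered. -/
def EFX0 (v : N → I → ℝ) (x : N → Finset I) : Prop :=
  ∀ i h : N,
    (∀ g ∈ x h, 0 ≤ v i g → bval v i (x i) ≥ bval v i ((x h).erase g)) ∨
    (∀ c ∈ x i, v i c < 0 → bval v i ((x i).erase c) ≥ bval v i (x h))

/-- `dpos v x i`: the maximin good value `d_i(x)`: the maximum, over agents `h ≠ i`
whose bundle contains an item valued positively by `i`, of the minimum value
(for `i`) of such an item in `x h`; `0` if no such agent exists. -/
def dpos [Fintype N] (v : N → I → ℝ) (x : N → Finset I) (i : N) : ℝ :=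
  if hA : (Finset.univ.filter fun h =>
      h ≠ i ∧ ((x h).filter fun j => 0 < v i j).Nonempty).Nonempty then
    (Finset.univ.filter fun h =>
        h ≠ i ∧ ((x h).filter fun j => 0 < v i j).Nonempty).sup' hA fun h =>
      if hB : ((x h).filter fun j => 0 < v i j).Nonempty then
        ((x h).filter fun j => 0 < v i j).inf' hB fun j => v i j
      else 0
  else 0

/-- `dnn v x i`: the variant `d⁰_i(x)` of the maximin good value where
nonnegatively-valued items are considered. -/
def dnn [Fintype N] (v : N → I → ℝ) (x : N → Finset I) (i : N) : ℝ :=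
  if hA : (Finset.univ.filter fun h =>
      h ≠ i ∧ ((x h).filter fun j => 0 ≤ v i j).Nonempty).Nonempty then
    (Finset.univ.filter fun h =>
        h ≠ i ∧ ((x h).filter fun j => 0 ≤ v i j).Nonempty).sup' hA fun h =>
      if hB : ((x h).filter fun j => 0 ≤ v i j).Nonempty then
        ((x h).filter fun j => 0 ≤ v i j).inf' hB fun j => v i j
      else 0
  else 0

/-- Proportional share of agent `i`. -/
def propShare [Fintype N] (v : N → I → ℝ) (M : Finset I) (i : N) : ℝ :=
  bval v i M / (Fintype.card N : ℝ)

/-- Proportionality up to the maximin good or any bad. -/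
def PropMX [Fintype N] (v : N → I → ℝ) (M : Finset I) (x : N → Finset I) : Prop :=
  ∀ i : N,
    bval v i (x i) + dpos v x i ≥ propShare v M i ∨
    (∀ c ∈ x i, v i c < 0 → bval v i ((x i).erase c) ≥ propShare v M i)

/-- The stronger notion PropMX₀. -/
def PropMX0 [Fintype N] (v : N → I → ℝ) (M : Finset I) (x : N → Finset I) : Prop :=
  ∀ i : N,
    bval v i (x i) + dnn v x i ≥ propShare v M i ∨
    (∀ c ∈ x i, v i c < 0 → bval v i ((x i).erase c) ≥ propShare v M i)

/-- Utilitarian social welfare. -/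
def SW [Fintype N] (v : N → I → ℝ) (x : N → Finset I) : ℝ :=
  ∑ i : N, bval v i (x i)

/-- `y` Pareto-dominates `x`. -/
def ParetoDominates [Fintype N] (v : N → I → ℝ) (y x : N → Finset I) : Prop :=
  (∀ i : N, bval v i (y i) ≥ bval v i (x i)) ∧ ∃ h : N, bval v h (y h) > bval v h (x h)

/-- `x` is Pareto-optimal among allocations of `M`. -/
def ParetoOptimal [Fintype N] (v : N → I → ℝ) (M : Finset I) (x : N → Finset I) : Prop :=
  ¬ ∃ y : N → Finset I, IsAllocation y M ∧ ParetoDominates v y x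

/-- `x` maximizes the social welfare over all allocations of `M`. -/
def MaxSW [Fintype N] (v : N → I → ℝ) (M : Finset I) (x : N → Finset I) : Prop :=
  ∀ y : N → Finset I, IsAllocation y M → SW v y ≤ SW v x

/-- A set `B` of (pure bad) items is identically ordered (IDO): it can be enumerated
as `c₁, …, c_k` with `v i c₁ ≤ v i c₂ ≤ … ≤ v i c_k` for every agent `i`. -/
def IDO (v : N → I → ℝ) (B : Finset I) : Prop :=
  ∃ l : List I, l.Nodup ∧ l.toFinset = B ∧ ∀ i : N, (l.map (v i)).Pairwise (· ≤ ·)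

end FairDivision

/-- The valuations of the counterexample: two agents `a, b` and three goods,
with `v a = (1, 0, 2)` and `v b = (0, 1, 2)`. -/
def vPropM0 : Fin 2 → Fin 3 → ℝ := ![![1, 0, 2], ![0, 1, 2]]

/-!
Moving an item from an agent who values it at `0` to one who values it positively is a Pareto
improvement, so in a Pareto-optimal allocation `a` holds `g₁` and `b` holds `g₂`. Whoever of the
two does not receive `g₃` then has value `1` for their bundle, while the other bundle contains an
item worth `0` to them (`g₁` or `g₂`), so `d⁰ = 0` and `1 + 0 < 3/2 = Prop`.
-/

section Reallocation

variable {N I : Type*}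

theorem bval_le_bval_of_subset {v : N → I → ℝ} {i : N} (hv : ∀ j, 0 ≤ v i j) {S T : Finset I}
    (hST : S ⊆ T) : bval v i S ≤ bval v i T :=
  Finset.sum_le_sum_of_subset_of_nonneg hST fun j _ _ => hv j

noncomputable def moveItem (x : N → Finset I) (j : I) (i : N) : N → Finset I :=
  fun k => if k = i then insert j (x k) else (x k).erase j

theorem bval_moveItem_self (v : N → I → ℝ) (x : N → Finset I) {i : N} {j : I} (hj : j ∉ x i) :
    bval v i (moveItem x j i i) = v i j + bval v i (x i) := by
  rw [moveItem, if_pos rfl, bval, bval, Finset.sum_insert hj]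

theorem bval_le_bval_moveItem_of_ne {v : N → I → ℝ} {x : N → Finset I} {i k : N} {j : I}
    (hki : k ≠ i) (hj : j ∈ x k → v k j ≤ 0) :
    bval v k (x k) ≤ bval v k (moveItem x j i k) := by
  simp only [moveItem, if_neg hki, bval]
  by_cases hjk : j ∈ x k
  · linarith [Finset.sum_erase_add (x k) (v k) hjk, hj hjk]
  · rw [Finset.erase_eq_of_notMem hjk]

variable [Fintype N] {x : N → Finset I} {S : Finset I}

theorem IsAllocation.exists_mem (hx : IsAllocation x S) {j : I} (hj : j ∈ S) :
    ∃ k, j ∈ x k := by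
  simpa [← hx.2] using hj

theorem IsAllocation.sum_bval (hx : IsAllocation x S) (v : N → I → ℝ) (i : N) :
    ∑ k, bval v i (x k) = bval v i S := by
  rw [← hx.2, bval, Finset.sum_biUnion fun k _ l _ hkl => hx.1 k l hkl]
  rfl

theorem IsAllocation.bval_add_bval_le {v : N → I → ℝ} {i : N} (hv : ∀ j, 0 ≤ v i j)
    (hx : IsAllocation x S) {k l : N} (hkl : k ≠ l) :
    bval v i (x k) + bval v i (x l) ≤ bval v i S :=
  hx.sum_bval v i ▸ Finset.add_le_sum (fun _ _ => Finset.sum_nonneg fun j _ => hv j)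
    (Finset.mem_univ k) (Finset.mem_univ l) hkl

theorem IsAllocation.moveItem (hx : IsAllocation x S) {j : I} (hj : j ∈ S) (i : N) :
    IsAllocation (moveItem x j i) S := by
  refine ⟨fun k l hkl => ?_, ?_⟩
  · have hxkl := hx.1 k l hkl
    unfold _root_.moveItem
    split_ifs with hk hl hl
    · exact absurd (hk.trans hl.symm) hkl
    · exact Finset.disjoint_insert_left.mpr
        ⟨Finset.notMem_erase j _, hxkl.mono_right (Finset.erase_subset _ _)⟩
    · exact Finset.disjoint_insert_right.mpr
        ⟨Finset.notMem_erase j _, hxkl.mono_left (Finset.erase_subset _ _)⟩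
    · exact hxkl.mono (Finset.erase_subset _ _) (Finset.erase_subset _ _)
  · ext a
    rw [← hx.2]
    simp only [Finset.mem_biUnion, Finset.mem_univ, true_and, _root_.moveItem]
    by_cases ha : a = j
    · subst ha
      exact iff_of_true ⟨i, by simp⟩ (hx.exists_mem hj)
    · refine exists_congr fun k => ?_
      split_ifs <;> simp [ha]

theorem ParetoOptimal.mem_of_pos {v : N → I → ℝ} (hpo : ParetoOptimal v S x)
    (hx : IsAllocation x S) {i : N} {j : I} (hj : j ∈ S) (hpos : 0 < v i j)
    (hother : ∀ k ≠ i, v k j ≤ 0) : j ∈ x i := by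
  by_contra hji
  refine hpo ⟨moveItem x j i, hx.moveItem hj i, fun k => ?_, i, ?_⟩
  · by_cases hki : k = i
    · subst hki
      linarith [bval_moveItem_self v x hji]
    · exact bval_le_bval_moveItem_of_ne hki fun _ => hother k hki
  · linarith [bval_moveItem_self v x hji]

theorem dnn_le {v : N → I → ℝ} {i : N} {c : ℝ} (hc : 0 ≤ c)
    (H : ∀ h ≠ i, (∃ j ∈ x h, 0 ≤ v i j) → ∃ j ∈ x h, 0 ≤ v i j ∧ v i j ≤ c) :
    dnn v x i ≤ c := by
  unfold dnn
  split_ifs with hA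
  · refine Finset.sup'_le _ _ fun h hh => ?_
    obtain ⟨-, hhi, hB⟩ := Finset.mem_filter.mp hh
    obtain ⟨j, hj, hvj, hjc⟩ := H h hhi (by simpa [Finset.Nonempty] using hB)
    rw [dif_pos hB]
    exact (Finset.inf'_le _ (Finset.mem_filter.mpr ⟨hj, hvj⟩)).trans hjc
  · exact hc

end Reallocation

theorem vPropM0_nonneg (i : Fin 2) (j : Fin 3) : 0 ≤ vPropM0 i j := by
  fin_cases i <;> fin_cases j <;> norm_num [vPropM0]

theorem bval_vPropM0_univ (i : Fin 2) : bval vPropM0 i Finset.univ = 3 := by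
  fin_cases i <;> simp [bval, Fin.sum_univ_three, vPropM0] <;> norm_num

theorem propShare_vPropM0 (i : Fin 2) : propShare vPropM0 Finset.univ i = 3 / 2 := by
  rw [propShare, bval_vPropM0_univ, Fintype.card_fin]
  norm_num

theorem bval_add_dnn_vPropM0_lt {x : Fin 2 → Finset (Fin 3)} (hx : IsAllocation x Finset.univ)
    {i h : Fin 2} (hih : i ≠ h) {z : Fin 3} (hz : z ∈ x h) (hvz : vPropM0 i z = 0)
    (hxh : 2 ≤ bval vPropM0 i (x h)) :
    bval vPropM0 i (x i) + dnn vPropM0 x i < propShare vPropM0 Finset.univ i := by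
  have hd : dnn vPropM0 x i ≤ 0 := dnn_le le_rfl fun h' hh' _ =>
    ⟨z, by rwa [show h' = h by omega], hvz.ge, hvz.le⟩
  have hsum := hx.bval_add_bval_le (vPropM0_nonneg i) hih
  rw [bval_vPropM0_univ] at hsum
  rw [propShare_vPropM0]
  linarith

/-- In the goods instance `vPropM0`, no allocation of the three
goods is both PropM₀ and Pareto-optimal. -/
theorem no_propm0_po_allocation :
    ¬ ∃ x : Fin 2 → Finset (Fin 3),
      IsAllocation x (Finset.univ : Finset (Fin 3)) ∧
      (∀ i : Fin 2, bval vPropM0 i (x i) + dnn vPropM0 x i ≥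
        propShare vPropM0 Finset.univ i) ∧
      ParetoOptimal vPropM0 Finset.univ x := by
  rintro ⟨x, hx, hprop, hpo⟩
  have h0 : 0 ∈ x 0 := hpo.mem_of_pos hx (Finset.mem_univ 0) (by norm_num [vPropM0])
    fun k hk => by fin_cases k <;> simp_all [vPropM0]
  have h1 : 1 ∈ x 1 := hpo.mem_of_pos hx (Finset.mem_univ 1) (by norm_num [vPropM0])
    fun k hk => by fin_cases k <;> simp_all [vPropM0]
  obtain h2 | h2 : 2 ∈ x 0 ∨ 2 ∈ x 1 := by
    simpa [Fin.exists_fin_two] using hx.exists_mem (Finset.mem_univ 2)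
  · refine (hprop 1).not_gt (bval_add_dnn_vPropM0_lt hx (by decide) h0 (by simp [vPropM0]) ?_)
    calc (2 : ℝ) = bval vPropM0 1 {0, 2} := by simp [bval, vPropM0]
      _ ≤ bval vPropM0 1 (x 0) :=
        bval_le_bval_of_subset (vPropM0_nonneg 1) (by simp [Finset.insert_subset_iff, h0, h2])
  · refine (hprop 0).not_gt (bval_add_dnn_vPropM0_lt hx (by decide) h1 (by simp [vPropM0]) ?_)
    calc (2 : ℝ) = bval vPropM0 0 {1, 2} := by simp [bval, vPropM0]
      _ ≤ bval vPropM0 0 (x 1) :=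
        bval_le_bval_of_subset (vPropM0_nonneg 0) (by simp [Finset.insert_subset_iff, h1, h2])
end

section
/- Let x be an EFX0 allocation of a set S ⊆ M of items, and let j ∈ M \ S be an item with v_{hj} ≤ 0 for every agent h. Let i be an agent with v_{ij} = 0 such that every agent h who envies i under x (i.e., v_h(x_h) < v_h(x_i)) has v_{hj} < 0. Then the allocation x' obtained from x by adding j to the bundle of agent i is an EFX0 allocation of S ∪ {j}. -/
open scoped Classical
open Finset

/-! Only the pairs involving agent `i` change. As `v i j = 0`, agent `i` values its enlarged
bundle as before and `j` is not a bad for `i`. Another agent `h` sees `x i` grow by an item of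
nonpositive value; the one new removal to check is that of `j` itself, which `h` counts as a
good only if `v h j = 0`, and then `h` does not envy `i`. -/

section AddingItem

variable {N I : Type*}

/-- `EFX0 v x` is definitionally `∀ a b, EFX0Pair v a (x a) (x b)`. -/
def EFX0Pair (v : N → I → ℝ) (a : N) (A B : Finset I) : Prop :=
  (∀ g ∈ B, 0 ≤ v a g → bval v a A ≥ bval v a (B.erase g)) ∨
    (∀ c ∈ A, v a c < 0 → bval v a (A.erase c) ≥ bval v a B)

theorem bval_insert (v : N → I → ℝ) (a : N) {T : Finset I} {j : I} (hj : j ∉ T) :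
    bval v a (insert j T) = v a j + bval v a T :=
  sum_insert hj

theorem bval_erase (v : N → I → ℝ) (a : N) {T : Finset I} {g : I} (hg : g ∈ T) :
    bval v a (T.erase g) = bval v a T - v a g :=
  sum_erase_eq_sub hg

theorem IsAllocation.notMem [Fintype N] {x : N → Finset I} {S : Finset I}
    (hx : IsAllocation x S) {j : I} (hj : j ∉ S) (h : N) : j ∉ x h := fun hmem =>
  hj (hx.2 ▸ mem_biUnion.mpr ⟨h, mem_univ h, hmem⟩)

theorem IsAllocation.update_insert [Fintype N] {x : N → Finset I} {S : Finset I}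
    (hx : IsAllocation x S) {j : I} (hj : j ∉ S) (i : N) :
    IsAllocation (Function.update x i (insert j (x i))) (insert j S) := by
  refine ⟨fun a b hab => ?_, ?_⟩
  · rcases eq_or_ne a i with rfl | ha
    · rw [Function.update_self, Function.update_of_ne hab.symm]
      exact disjoint_insert_left.mpr ⟨hx.notMem hj b, hx.1 a b hab⟩
    rcases eq_or_ne b i with rfl | hb
    · rw [Function.update_self, Function.update_of_ne ha]
      exact disjoint_insert_right.mpr ⟨hx.notMem hj a, hx.1 a b hab⟩
    · rw [Function.update_of_ne ha, Function.update_of_ne hb]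
      exact hx.1 a b hab
  · rw [← hx.2]
    ext g
    simp only [mem_biUnion, mem_univ, true_and, mem_insert, Function.update_apply]
    constructor
    · rintro ⟨a, ha⟩
      split_ifs at ha with hai
      · exact (mem_insert.mp ha).imp id fun h => ⟨i, h⟩
      · exact Or.inr ⟨a, ha⟩
    · rintro (rfl | ⟨a, ha⟩)
      · exact ⟨i, by simp⟩
      · refine ⟨a, ?_⟩
        split_ifs with hai
        · exact mem_insert_of_mem (hai ▸ ha)
        · exact ha

theorem efx0Pair_self (v : N → I → ℝ) (a : N) (A : Finset I) : EFX0Pair v a A A :=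
  Or.inl fun g hg hvg => by rw [bval_erase v a hg]; linarith

theorem EFX0Pair.insert_own_of_eq_zero {v : N → I → ℝ} {a : N} {A B : Finset I} {j : I}
    (hAB : EFX0Pair v a A B) (hjA : j ∉ A) (hzero : v a j = 0) :
    EFX0Pair v a (insert j A) B := by
  have hval : bval v a (insert j A) = bval v a A := by rw [bval_insert v a hjA, hzero, zero_add]
  rcases hAB with hgood | hbad
  · exact Or.inl fun g hg hvg => hval ▸ hgood g hg hvg
  · refine Or.inr fun c hc hvc => ?_
    have hcj : c ≠ j := by rintro rfl; linarith
    rw [erase_insert_of_ne hcj.symm, bval_insert v a fun h => hjA (mem_of_mem_erase h), hzero,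
      zero_add]
    exact hbad c ((mem_insert.mp hc).resolve_left hcj) hvc

theorem EFX0Pair.insert_other_of_nonpos {v : N → I → ℝ} {a : N} {A B : Finset I} {j : I}
    (hAB : EFX0Pair v a A B) (hjB : j ∉ B) (hneg : v a j ≤ 0)
    (henvy : bval v a A < bval v a B → v a j < 0) :
    EFX0Pair v a A (insert j B) := by
  rcases hAB with hgood | hbad
  · refine Or.inl fun g hg hvg => ?_
    rcases mem_insert.mp hg with rfl | hgB
    · rw [erase_insert hjB]
      exact not_lt.mp fun hlt => (henvy hlt).not_ge hvg
    · have hgj : g ≠ j := by rintro rfl; exact hjB hgB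
      rw [erase_insert_of_ne hgj.symm, bval_insert v a fun h => hjB (mem_of_mem_erase h)]
      linarith [hgood g hgB hvg]
  · exact Or.inr fun c hc hvc => by rw [bval_insert v a hjB]; linarith [hbad c hc hvc]

end AddingItem

theorem efx0_preserved_adding_zero_item_general {N I : Type*} [Fintype N]
    (v : N → I → ℝ) (M S : Finset I) (x : N → Finset I) (j : I) (i : N)
    (hx : IsAllocation x S) (hEFX0 : EFX0 v x)
    (hj : j ∈ M \ S) (hneg : ∀ h : N, v h j ≤ 0) (hzero : v i j = 0)
    (henvy : ∀ h : N, bval v h (x h) < bval v h (x i) → v h j < 0) :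
    IsAllocation (Function.update x i (insert j (x i))) (insert j S) ∧
      EFX0 v (Function.update x i (insert j (x i))) := by
  have hjS : j ∉ S := (mem_sdiff.mp hj).2
  have hjx := hx.notMem hjS
  refine ⟨hx.update_insert hjS i, fun a b => ?_⟩
  show EFX0Pair v a (Function.update x i (insert j (x i)) a)
    (Function.update x i (insert j (x i)) b)
  rcases eq_or_ne a i with rfl | ha
  · rcases eq_or_ne b a with rfl | hb
    · exact efx0Pair_self v b _
    · rw [Function.update_self, Function.update_of_ne hb]
      exact EFX0Pair.insert_own_of_eq_zero (hEFX0 a b) (hjx a) hzero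
  · rw [Function.update_of_ne ha]
    rcases eq_or_ne b i with rfl | hb
    · rw [Function.update_self]
      exact EFX0Pair.insert_other_of_nonpos (hEFX0 a b) (hjx b) (hneg a) (henvy a)
    · rw [Function.update_of_ne hb]
      exact hEFX0 a b

/-- Adding an item `j ∈ M \ S` that no agent values positively to
the bundle of an agent `i` with `v i j = 0`, such that every agent envying `i`
values `j` negatively, preserves EFX₀. -/
theorem efx0_preserved_adding_zero_item {N I : Type*} [Fintype N] [Fintype I] [Nonempty N]
    (v : N → I → ℝ) (M S : Finset I) (x : N → Finset I) (j : I) (i : N)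
    (hS : S ⊆ M) (hx : IsAllocation x S) (hEFX0 : EFX0 v x)
    (hj : j ∈ M \ S) (hneg : ∀ h : N, v h j ≤ 0) (hzero : v i j = 0)
    (henvy : ∀ h : N, bval v h (x h) < bval v h (x i) → v h j < 0) :
    IsAllocation (Function.update x i (insert j (x i))) (insert j S) ∧
      EFX0 v (Function.update x i (insert j (x i))) :=
  efx0_preserved_adding_zero_item_general v M S x j i hx hEFX0 hj hneg hzero henvy
end
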